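/- arXiv:2001.09397 — 9 statements merged into one kernel-verified Lean document; each statement's English description precedes it below -/
import Mathlib

section
/- Let M ≥ 1 be an integer and N = 2^{M+1}, and let {p_n} be the Prouhet–Thue–Morse sequence. Then the function f : ℝ → ℂ defined by f(θ) = Σ_{n=0}^{N−1} (−1)^{p_n} e^{inθ} has a spectral null of order M at θ = 0, i.e., the m-th derivative of f at θ = 0 vanishes for every integer m with 0 ≤ m ≤ M. -/
/-!
Write `s n = (-1) ^ p n`, so that `s (2k) = s k` and `s (2k+1) = -s k`, and differentiate under
the finite sum: `f⁽ᵐ⁾ 0 = iᵐ ∑_{n < N} s n nᵐ`. These moments of `s` over `2 ^ L` terms vanish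
for `m < L`: pairing `n = 2k` with `n = 2k+1` turns the `m`-th moment over `2 ^ (L+1)` terms into
a combination, with binomial coefficients coming from `(2k+1)ᵐ - (2k)ᵐ`, of moments of order
`< m` over `2 ^ L` terms.
-/

open Complex Finset

lemma sum_range_two_mul {M : Type*} [AddCommMonoid M] (K : ℕ) (g : ℕ → M) :
    ∑ n ∈ range (2 * K), g n = ∑ k ∈ range K, (g (2 * k) + g (2 * k + 1)) := by
  induction K with
  | zero => simp
  | succ K ih =>
    rw [Nat.mul_succ, sum_range_succ, sum_range_succ, sum_range_succ, ih, add_assoc]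

section Moments

variable {R : Type*} [CommRing R]

lemma pow_sub_add_one_pow (x : R) (m : ℕ) :
    x ^ m - (x + 1) ^ m = -∑ j ∈ range m, (m.choose j : R) * x ^ j := by
  rw [add_pow, sum_range_succ]
  simp only [one_pow, mul_one, Nat.choose_self, Nat.cast_one]
  rw [sum_congr rfl fun j _ => mul_comm (x ^ j) (m.choose j : R)]
  ring

theorem sum_range_two_pow_mul_pow_eq_zero {s : ℕ → R} (hs_even : ∀ k, s (2 * k) = s k)
    (hs_odd : ∀ k, s (2 * k + 1) = -s k) {m L : ℕ} (hmL : m < L) :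
    ∑ n ∈ range (2 ^ L), s n * (n : R) ^ m = 0 := by
  induction m using Nat.strong_induction_on generalizing L with
  | _ m ih =>
  obtain ⟨L, rfl⟩ : ∃ L', L = L' + 1 := ⟨L - 1, by omega⟩
  calc ∑ n ∈ range (2 ^ (L + 1)), s n * (n : R) ^ m
      = ∑ k ∈ range (2 ^ L), s k * ((2 * k : R) ^ m - (2 * k + 1) ^ m) := by
        rw [pow_succ', sum_range_two_mul]
        refine sum_congr rfl fun k _ => ?_
        rw [hs_even, hs_odd]
        push_cast
        ring
    _ = -∑ j ∈ range m,
          (m.choose j : R) * 2 ^ j * ∑ k ∈ range (2 ^ L), s k * (k : R) ^ j := by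
        simp_rw [pow_sub_add_one_pow, mul_pow, mul_neg, mul_sum, sum_neg_distrib]
        rw [sum_comm]
        exact congrArg Neg.neg (sum_congr rfl fun j _ => sum_congr rfl fun k _ => by ring)
    _ = 0 := by
        refine neg_eq_zero.mpr (sum_eq_zero fun j hj => ?_)
        have hjm := mem_range.mp hj
        rw [ih j hjm (by omega), mul_zero]

end Moments

section ThueMorse

variable {p : ℕ → ℕ} (hp0 : p 0 = 0) (hpe : ∀ k, p (2 * k) = p k)
  (hpo : ∀ k, p (2 * k + 1) = 1 - p k)
include hp0 hpe hpo

lemma thueMorse_le_one (n : ℕ) : p n ≤ 1 := by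
  induction n using Nat.evenOddRec with
  | h0 => rw [hp0]; omega
  | h_even n _ => rwa [hpe]
  | h_odd n _ => rw [hpo]; omega

lemma neg_one_pow_thueMorse_odd {R : Type*} [Monoid R] [HasDistribNeg R] (k : ℕ) :
    (-1 : R) ^ p (2 * k + 1) = -(-1) ^ p k := by
  have hk := thueMorse_le_one hp0 hpe hpo k
  rw [hpo]
  interval_cases p k <;> simp

end ThueMorse

lemma iteratedDeriv_sum_cexp {ι : Type*} (t : Finset ι) (a c : ι → ℂ) (m : ℕ) :
    iteratedDeriv m (fun θ : ℝ => ∑ i ∈ t, a i * exp (c i * θ)) =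
      fun θ : ℝ => ∑ i ∈ t, a i * c i ^ m * exp (c i * θ) := by
  induction m with
  | zero => simp
  | succ m ih =>
    rw [iteratedDeriv_succ, ih]
    funext θ
    refine (HasDerivAt.fun_sum fun i _ => ?_).deriv
    have hterm :=
      (((hasDerivAt_id (θ : ℂ)).const_mul (c i)).cexp.const_mul (a i * c i ^ m)).comp_ofReal
    exact hterm.congr_deriv (by simp only [id, mul_one]; ring)

theorem ptm_spectral_null_general (M : ℕ) (N : ℕ) (hN : N = 2 ^ (M + 1))
    (p : ℕ → ℕ) (hp0 : p 0 = 0) (hpe : ∀ k, p (2 * k) = p k)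
    (hpo : ∀ k, p (2 * k + 1) = 1 - p k)
    (f : ℝ → ℂ)
    (hf : ∀ θ : ℝ, f θ = ∑ n ∈ Finset.range N,
      (-1 : ℂ) ^ (p n) * Complex.exp (Complex.I * (n : ℂ) * (θ : ℂ))) :
    ∀ m : ℕ, m ≤ M → iteratedDeriv m f 0 = 0 := by
  intro m hm
  have hmoment : ∑ n ∈ range N, (-1 : ℂ) ^ p n * (n : ℂ) ^ m = 0 := by
    rw [hN]
    exact sum_range_two_pow_mul_pow_eq_zero (fun k => by rw [hpe])
      (neg_one_pow_thueMorse_odd hp0 hpe hpo) (by omega)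
  rw [funext hf, iteratedDeriv_sum_cexp]
  simp only [ofReal_zero, mul_zero, exp_zero, mul_one, mul_pow]
  rw [← mul_zero (I ^ m), ← hmoment, mul_sum]
  exact sum_congr rfl fun n _ => by ring

/-- **PTM design (Theorem 1).** If `p` is the Prouhet–Thue–Morse sequence and
`N = 2^(M+1)`, then `f θ = ∑_{n<N} (-1)^{p n} e^{i n θ}` has a spectral null of
order `M` at `θ = 0`. -/
theorem ptm_spectral_null (M : ℕ) (hM : 1 ≤ M) (N : ℕ) (hN : N = 2 ^ (M + 1))
    (p : ℕ → ℕ) (hp0 : p 0 = 0) (hpe : ∀ k, p (2 * k) = p k)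
    (hpo : ∀ k, p (2 * k + 1) = 1 - p k)
    (f : ℝ → ℂ)
    (hf : ∀ θ : ℝ, f θ = ∑ n ∈ Finset.range N,
      (-1 : ℂ) ^ (p n) * Complex.exp (Complex.I * (n : ℂ) * (θ : ℂ))) :
    ∀ m : ℕ, m ≤ M → iteratedDeriv m f 0 = 0 :=
  ptm_spectral_null_general M N hN p hp0 hpe hpo f hf
end

section
/- Let M ≥ 1 be an integer and N = 2^{M+1}, and let {p_n} be the Prouhet–Thue–Morse sequence. Then for every integer m with 0 ≤ m ≤ M, Σ_{n : 0 ≤ n < N, p_n = 0} n^m = Σ_{n : 0 ≤ n < N, p_n = 1} n^m (with the convention 0^0 = 1); that is, the PTM sequence partitions {0, 1, …, N−1} into two sets with equal power sums of all orders up to M. -/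
open Finset

private lemma ptm_sum_two_mul (f : ℕ → ℤ) :
    ∀ N, ∑ n ∈ range (2 * N), f n = ∑ k ∈ range N, (f (2 * k) + f (2 * k + 1))
  | 0 => by simp
  | (N + 1) => by
      have h : 2 * (N + 1) = (2 * N + 1) + 1 := by ring
      rw [h, sum_range_succ, sum_range_succ, ptm_sum_two_mul f N, sum_range_succ]
      ring

private lemma ptm_p_le_one (p : ℕ → ℕ) (hp0 : p 0 = 0) (hpe : ∀ k, p (2 * k) = p k)
    (hpo : ∀ k, p (2 * k + 1) = 1 - p k) : ∀ n, p n ≤ 1 := by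
  intro n
  induction n using Nat.strong_induction_on with
  | _ n ih =>
    rcases Nat.even_or_odd n with ⟨k, hk⟩ | ⟨k, hk⟩
    · have hk' : n = 2 * k := by omega
      subst hk'
      rw [hpe]
      rcases Nat.eq_zero_or_pos k with h | h
      · simp [h, hp0]
      · exact ih k (by omega)
    · subst hk
      rw [hpo]
      exact Nat.sub_le _ _

private lemma ptm_key (p : ℕ → ℕ) (hpe : ∀ k, p (2 * k) = p k)
    (hpo : ∀ k, p (2 * k + 1) = 1 - p k) (hle : ∀ n, p n ≤ 1) :
    ∀ K, ∀ m < K, ∑ n ∈ range (2 ^ K), (-1 : ℤ) ^ (p n) * (n : ℤ) ^ m = 0 := by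
  intro K
  induction K with
  | zero => intro m hm; omega
  | succ K ih =>
    intro m hm
    have h2 : 2 ^ (K + 1) = 2 * 2 ^ K := by ring
    rw [h2, ptm_sum_two_mul]
    have hterm : ∀ k : ℕ,
        (-1 : ℤ) ^ (p (2 * k)) * ((2 * k : ℕ) : ℤ) ^ m
          + (-1 : ℤ) ^ (p (2 * k + 1)) * ((2 * k + 1 : ℕ) : ℤ) ^ m
        = (-1 : ℤ) ^ (p k) * (((2 * k : ℕ) : ℤ) ^ m - ((2 * k + 1 : ℕ) : ℤ) ^ m) := by
      intro k
      rw [hpe, hpo]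
      rcases Nat.le_one_iff_eq_zero_or_eq_one.mp (hle k) with h | h <;> simp [h] <;> ring
    have expand : ∀ k : ℕ,
        ((2 * k : ℕ) : ℤ) ^ m - ((2 * k + 1 : ℕ) : ℤ) ^ m
        = - ∑ j ∈ range m, (2 * (k : ℤ)) ^ j * (m.choose j : ℤ) := by
      intro k
      have h := add_pow (2 * (k : ℤ)) 1 m
      simp only [one_pow, mul_one] at h
      push_cast
      rw [h, sum_range_succ]
      simp [Nat.choose_self]
    calc ∑ k ∈ range (2 ^ K),
          ((-1 : ℤ) ^ (p (2 * k)) * ((2 * k : ℕ) : ℤ) ^ m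
            + (-1 : ℤ) ^ (p (2 * k + 1)) * ((2 * k + 1 : ℕ) : ℤ) ^ m)
        = ∑ k ∈ range (2 ^ K), ∑ j ∈ range m,
            -((2 : ℤ) ^ j * (m.choose j : ℤ) * ((-1 : ℤ) ^ (p k) * (k : ℤ) ^ j)) := by
          refine sum_congr rfl fun k _ => ?_
          rw [hterm k, expand k, mul_neg, mul_sum, ← Finset.sum_neg_distrib]
          refine sum_congr rfl fun j _ => ?_
          rw [mul_pow]
          ring
      _ = ∑ j ∈ range m, ∑ k ∈ range (2 ^ K),
            -((2 : ℤ) ^ j * (m.choose j : ℤ) * ((-1 : ℤ) ^ (p k) * (k : ℤ) ^ j)) :=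
          sum_comm
      _ = 0 := by
          refine sum_eq_zero fun j hj => ?_
          have hjK : j < K := lt_of_lt_of_le (mem_range.mp hj) (Nat.lt_succ_iff.mp hm)
          have h0 := ih j hjK
          rw [Finset.sum_neg_distrib, ← mul_sum, h0, mul_zero, neg_zero]

/-- **Prouhet's theorem.** The Prouhet–Thue–Morse sequence partitions
`{0, 1, …, 2^(M+1) − 1}` into two sets with equal power sums of all orders
up to `M`. -/
theorem ptm_prouhet_power_sums (M : ℕ) (hM : 1 ≤ M) (N : ℕ) (hN : N = 2 ^ (M + 1))
    (p : ℕ → ℕ) (hp0 : p 0 = 0) (hpe : ∀ k, p (2 * k) = p k)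
    (hpo : ∀ k, p (2 * k + 1) = 1 - p k) :
    ∀ m : ℕ, m ≤ M →
      ∑ n ∈ (Finset.range N).filter (fun n => p n = 0), n ^ m =
      ∑ n ∈ (Finset.range N).filter (fun n => p n = 1), n ^ m := by
  intro m hm
  have hle := ptm_p_le_one p hp0 hpe hpo
  have hkey := ptm_key p hpe hpo hle (M + 1) m (by omega)
  rw [← hN] at hkey
  have hfilter : (Finset.range N).filter (fun n => p n = 1)
      = (Finset.range N).filter (fun n => ¬ p n = 0) := by
    refine filter_congr fun n _ => ?_
    have := hle n
    constructor <;> intro h <;> omega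
  have hsplit : ∑ n ∈ (Finset.range N).filter (fun n => p n = 0), ((n : ℤ) ^ m)
      - ∑ n ∈ (Finset.range N).filter (fun n => ¬ p n = 0), ((n : ℤ) ^ m)
      = ∑ n ∈ range N, (-1 : ℤ) ^ (p n) * (n : ℤ) ^ m := by
    rw [← sum_filter_add_sum_filter_not (range N) (fun n => p n = 0)
      (fun n => (-1 : ℤ) ^ (p n) * (n : ℤ) ^ m), sub_eq_add_neg]
    have e1 : ∑ n ∈ (Finset.range N).filter (fun n => p n = 0),
        ((-1 : ℤ) ^ (p n) * (n : ℤ) ^ m)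
        = ∑ n ∈ (Finset.range N).filter (fun n => p n = 0), ((n : ℤ) ^ m) := by
      refine sum_congr rfl fun n hn => ?_
      have h := (mem_filter.mp hn).2
      simp [h]
    have e2 : ∑ n ∈ (Finset.range N).filter (fun n => ¬ p n = 0),
        ((-1 : ℤ) ^ (p n) * (n : ℤ) ^ m)
        = -∑ n ∈ (Finset.range N).filter (fun n => ¬ p n = 0), ((n : ℤ) ^ m) := by
      rw [← Finset.sum_neg_distrib]
      refine sum_congr rfl fun n hn => ?_
      have h := (mem_filter.mp hn).2
      have h1 : p n = 1 := by have := hle n; omega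
      simp [h1]
    rw [e1, e2]
  rw [hkey] at hsplit
  have hz : ∑ n ∈ (Finset.range N).filter (fun n => p n = 0), ((n : ℤ) ^ m)
      = ∑ n ∈ (Finset.range N).filter (fun n => p n = 1), ((n : ℤ) ^ m) := by
    rw [hfilter]; linarith [hsplit]
  have : ((∑ n ∈ (Finset.range N).filter (fun n => p n = 0), n ^ m : ℕ) : ℤ)
      = ((∑ n ∈ (Finset.range N).filter (fun n => p n = 1), n ^ m : ℕ) : ℤ) := by
    push_cast
    exact hz
  exact_mod_cast this
end

section
/- Let N ≥ 2 and M be integers with 0 ≤ M ≤ N−2, let r_0, …, r_{N−1} be real numbers, and define f : ℝ → ℂ by f(θ) = Σ_{n=0}^{N−1} r_n e^{inθ}. Then f has a spectral null of order M at θ = 0 if and only if there exist real numbers a_0, …, a_{N−M−2} such that f(θ) = Σ_{m=0}^{N−M−2} a_m (1 − e^{iθ})^{m+M+1} for all θ ∈ ℝ; that is, the subspace of such trigonometric polynomials with an M-th order spectral null is spanned by the functions g_n(θ) = (1 − e^{iθ})^n for n = M+1, …, N−1. -/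
/-!
Write `f θ = P(e^{iθ})` with `P = ∑ rₙ Xⁿ`. Differentiating in `θ` turns into applying `i` times
the Euler operator `X · d/dX` to `P`, so `f⁽ᵐ⁾(0) = iᵐ ((X d/dX)ᵐ P)(1)`. In characteristic zero,
if `t ≠ 0` is a root of `P`, then `(X - t)^(k+1) ∣ P ↔ (X - t)^k ∣ X P'` (the root multiplicity
drops by exactly one, and `X` does not vanish at `t`); inductively, a spectral null of order `M`
means `(1 - X)^(M+1) ∣ P`. As `deg P < N`, this says `P = (1 - X)^(M+1) Q` with `deg Q < N - M - 1`,
and expanding `Q` in powers of `1 - X` gives the spanning family. Finally, a real polynomial is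
determined by its values on the unit circle, so identities in `θ` are identities of polynomials.
-/

open Complex Finset Polynomial

noncomputable def eulerOperator (R : Type*) [CommSemiring R] : Module.End R R[X] :=
  LinearMap.mulLeft R X ∘ₗ derivative

@[simp]
theorem eulerOperator_apply {R : Type*} [CommSemiring R] (P : R[X]) :
    eulerOperator R P = X * derivative P :=
  rfl

section EulerOperator

variable {R : Type*} [CommRing R] [IsDomain R] [CharZero R]

theorem X_sub_C_pow_succ_dvd_iff_dvd_eulerOperator {t : R} (ht : t ≠ 0) {P : R[X]}
    (hP : P.IsRoot t) (k : ℕ) :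
    (X - C t) ^ (k + 1) ∣ P ↔ (X - C t) ^ k ∣ eulerOperator R P := by
  rcases eq_or_ne P 0 with rfl | hP0
  · simp
  have hP' : derivative P ≠ 0 := by
    intro h
    rw [eq_C_of_derivative_eq_zero h, IsRoot, eval_C] at hP
    exact hP0 (by rw [eq_C_of_derivative_eq_zero h, hP, C_0])
  have hXP' : X * derivative P ≠ 0 := mul_ne_zero X_ne_zero hP'
  have hmult : rootMultiplicity t (X * derivative P) = rootMultiplicity t P - 1 := by
    rw [rootMultiplicity_mul hXP', rootMultiplicity_eq_zero (by simpa using ht),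
      derivative_rootMultiplicity_of_root hP, zero_add]
  have hpos := (rootMultiplicity_pos hP0).2 hP
  rw [eulerOperator_apply, ← le_rootMultiplicity_iff hP0, ← le_rootMultiplicity_iff hXP', hmult]
  omega

theorem X_sub_C_pow_succ_dvd_iff_eval_eulerOperator_pow {t : R} (ht : t ≠ 0) (M : ℕ) (P : R[X]) :
    (X - C t) ^ (M + 1) ∣ P ↔ ∀ m ≤ M, ((eulerOperator R ^ m) P).eval t = 0 := by
  induction M generalizing P with
  | zero => simp [dvd_iff_isRoot]
  | succ M ih =>
    have hroot : (X - C t) ^ (M + 2) ∣ P → P.IsRoot t := fun h =>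
      dvd_iff_isRoot.1 ((dvd_pow_self _ (by omega)).trans h)
    calc (X - C t) ^ (M + 2) ∣ P
        ↔ P.IsRoot t ∧ (X - C t) ^ (M + 1) ∣ eulerOperator R P :=
          ⟨fun h => ⟨hroot h, (X_sub_C_pow_succ_dvd_iff_dvd_eulerOperator ht (hroot h) _).1 h⟩,
            fun h => (X_sub_C_pow_succ_dvd_iff_dvd_eulerOperator ht h.1 _).2 h.2⟩
      _ ↔ P.eval t = 0 ∧ ∀ m ≤ M, ((eulerOperator R ^ (m + 1)) P).eval t = 0 := by
          rw [IsRoot.def, ih]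
          simp only [pow_succ, Module.End.mul_apply]
      _ ↔ ∀ m ≤ M + 1, ((eulerOperator R ^ m) P).eval t = 0 := by
          refine ⟨fun ⟨h0, h⟩ m hm => ?_,
            fun h => ⟨h 0 (Nat.zero_le _), fun m hm => h _ (by omega)⟩⟩
          rcases m with _ | m
          exacts [h0, h m (by omega)]

end EulerOperator

def HasSpectralNull (f : ℝ → ℂ) (M : ℕ) : Prop :=
  ∀ m ≤ M, iteratedDeriv m f 0 = 0

theorem hasDerivAt_eval_exp_I_mul (P : ℂ[X]) (θ : ℝ) :
    HasDerivAt (fun θ : ℝ => P.eval (exp (I * θ)))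
      (I * (eulerOperator ℂ P).eval (exp (I * θ))) θ := by
  have hexp : HasDerivAt (fun θ : ℝ => exp (I * θ)) (exp (I * θ) * I) θ :=
    ((hasDerivAt_id θ).ofReal_comp.const_mul I).cexp.congr_deriv (by simp)
  refine ((P.hasDerivAt (exp (I * θ))).comp θ hexp).congr_deriv ?_
  rw [eulerOperator_apply, eval_mul, eval_X]
  ring

theorem iteratedDeriv_eval_exp_I_mul (P : ℂ[X]) (m : ℕ) :
    iteratedDeriv m (fun θ : ℝ => P.eval (exp (I * θ))) =
      fun θ : ℝ => I ^ m * ((eulerOperator ℂ ^ m) P).eval (exp (I * θ)) := by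
  induction m with
  | zero => simp
  | succ m ih =>
    ext θ
    rw [iteratedDeriv_succ, ih, ((hasDerivAt_eval_exp_I_mul _ θ).const_mul _).deriv, pow_succ,
      pow_succ', Module.End.mul_apply, mul_assoc]

theorem hasSpectralNull_eval_exp_I_mul_iff (P : ℂ[X]) (M : ℕ) :
    HasSpectralNull (fun θ : ℝ => P.eval (exp (I * θ))) M ↔ (X - C 1) ^ (M + 1) ∣ P := by
  rw [X_sub_C_pow_succ_dvd_iff_eval_eulerOperator_pow one_ne_zero, HasSpectralNull]
  simp [iteratedDeriv_eval_exp_I_mul, I_ne_zero]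

theorem hasSpectralNull_aeval_exp_I_mul_iff (P : ℝ[X]) (M : ℕ) :
    HasSpectralNull (fun θ : ℝ => aeval (exp (I * θ)) P) M ↔ (1 - X) ^ (M + 1) ∣ P := by
  have hassoc : Associated ((X - C 1) ^ (M + 1)) ((1 - X : ℝ[X]) ^ (M + 1)) := by
    rw [← neg_sub X, C_1]
    exact (Associated.refl _).neg_right.pow_pow
  simp_rw [← eval_map_algebraMap, hasSpectralNull_eval_exp_I_mul_iff, ← hassoc.dvd_iff_dvd_left,
    ← map_dvd_map' (algebraMap ℝ ℂ), Polynomial.map_pow, Polynomial.map_sub, map_X, map_C, map_one]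

theorem eq_sum_C_mul_one_sub_X_pow {R : Type*} [CommRing R] {Q : R[X]} {K : ℕ}
    (hQ : Q.natDegree < K) :
    Q = ∑ m ∈ range K, C ((Q.comp (1 - X)).coeff m) * (1 - X) ^ m := by
  have hinv : (Q.comp (1 - X)).comp (1 - X) = Q := by
    rw [comp_assoc]
    simp
  have hlin : (1 - X : R[X]).natDegree ≤ 1 :=
    (natDegree_sub_le _ _).trans (max_le (by simp) natDegree_X_le)
  have hdeg : (Q.comp (1 - X)).natDegree < K :=
    natDegree_comp_le.trans_lt (by nlinarith)
  conv_lhs => rw [← hinv, comp, eval₂_eq_sum_range' C hdeg]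

theorem one_sub_X_pow_dvd_iff_exists_eq_sum {R : Type*} [CommRing R] [IsDomain R] {P : R[X]}
    {N : ℕ} (hP : P.degree < N) (M : ℕ) :
    (1 - X) ^ (M + 1) ∣ P ↔
      ∃ a : ℕ → R, P = ∑ m ∈ range (N - M - 1), C (a m) * (1 - X) ^ (m + M + 1) := by
  constructor
  · rintro ⟨Q, rfl⟩
    rcases eq_or_ne Q 0 with rfl | hQ
    · exact ⟨0, by simp⟩
    have hlin : (1 - X : R[X]) = -(X - C 1) := by rw [neg_sub, C_1]
    have hpow : ((1 - X : R[X]) ^ (M + 1)) ≠ 0 := by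
      rw [hlin]
      exact pow_ne_zero _ (neg_ne_zero.2 (X_sub_C_ne_zero 1))
    have hdeg : Q.natDegree < N - M - 1 := by
      have := (natDegree_lt_iff_degree_lt (mul_ne_zero hpow hQ)).2 hP
      rw [natDegree_mul hpow hQ, natDegree_pow, hlin, natDegree_neg, natDegree_X_sub_C] at this
      omega
    refine ⟨fun m => (Q.comp (1 - X)).coeff m, ?_⟩
    conv_lhs => rw [eq_sum_C_mul_one_sub_X_pow hdeg, mul_sum]
    exact sum_congr rfl fun m _ => by ring
  · rintro ⟨a, rfl⟩
    exact dvd_sum fun m _ => dvd_mul_of_dvd_right (pow_dvd_pow _ (by omega)) _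

theorem eq_of_forall_aeval_exp_I_mul_eq {P Q : ℝ[X]}
    (h : ∀ θ : ℝ, aeval (exp (I * θ)) P = aeval (exp (I * θ)) Q) : P = Q := by
  have hinj : Set.InjOn (fun θ : ℝ => exp (I * θ)) (Set.Icc 0 Real.pi) := fun x hx y hy hxy =>
    Real.injOn_cos hx hy (by simpa [mul_comm I, exp_ofReal_mul_I_re] using congrArg re hxy)
  apply map_injective (algebraMap ℝ ℂ) (algebraMap ℝ ℂ).injective
  refine eq_of_infinite_eval_eq _ _ (((Set.Icc_infinite Real.pi_pos).image hinj).mono ?_)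
  rintro _ ⟨θ, -, rfl⟩
  simp [eval_map_algebraMap, h θ]

theorem spectral_null_subspace_general (N M : ℕ)
    (r : ℕ → ℝ) (f : ℝ → ℂ)
    (hf : ∀ θ : ℝ, f θ = ∑ n ∈ Finset.range N,
      (r n : ℂ) * Complex.exp (Complex.I * (n : ℂ) * (θ : ℂ))) :
    (∀ m : ℕ, m ≤ M → iteratedDeriv m f 0 = 0) ↔
    (∃ a : ℕ → ℝ, ∀ θ : ℝ, f θ = ∑ m ∈ Finset.range (N - M - 1),
      (a m : ℂ) * (1 - Complex.exp (Complex.I * (θ : ℂ))) ^ (m + M + 1)) := by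
  set P : ℝ[X] := ∑ n ∈ range N, C (r n) * X ^ n
  have hfP : f = fun θ : ℝ => aeval (exp (I * θ)) P := by
    ext1 θ
    simp only [hf, P, map_sum, map_mul, map_pow, aeval_C, aeval_X, ← exp_nat_mul]
    exact sum_congr rfl fun n _ => by rw [coe_algebraMap]; ring_nf
  have hdeg : P.degree < N := by
    rw [← mem_degreeLT]
    exact Submodule.sum_mem _ fun n hn =>
      mem_degreeLT.2 ((degree_C_mul_X_pow_le _ _).trans_lt (by exact_mod_cast mem_range.1 hn))
  calc (∀ m ≤ M, iteratedDeriv m f 0 = 0)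
      ↔ (1 - X) ^ (M + 1) ∣ P := by rw [hfP]; exact hasSpectralNull_aeval_exp_I_mul_iff P M
    _ ↔ ∃ a : ℕ → ℝ, P = ∑ m ∈ range (N - M - 1), C (a m) * (1 - X) ^ (m + M + 1) :=
      one_sub_X_pow_dvd_iff_exists_eq_sum hdeg M
    _ ↔ _ := by
      refine exists_congr fun a => ⟨fun h θ => ?_, fun h => eq_of_forall_aeval_exp_I_mul_eq ?_⟩
      · simp [hfP, h, map_sum]
      · intro θ
        simpa [hfP, map_sum] using h θ

/-- **Theorem 3 (subspace characterization).** A trigonometric polynomial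
`f θ = ∑_{n<N} r_n e^{inθ}` with real coefficients has an `M`-th order spectral
null at `θ = 0` iff it is a real linear combination of the functions
`g_n(θ) = (1 - e^{iθ})^n` for `n = M+1, …, N−1`. -/
theorem spectral_null_subspace (N M : ℕ) (hN : 2 ≤ N) (hM : M ≤ N - 2)
    (r : ℕ → ℝ) (f : ℝ → ℂ)
    (hf : ∀ θ : ℝ, f θ = ∑ n ∈ Finset.range N,
      (r n : ℂ) * Complex.exp (Complex.I * (n : ℂ) * (θ : ℂ))) :
    (∀ m : ℕ, m ≤ M → iteratedDeriv m f 0 = 0) ↔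
    (∃ a : ℕ → ℝ, ∀ θ : ℝ, f θ = ∑ m ∈ Finset.range (N - M - 1),
      (a m : ℂ) * (1 - Complex.exp (Complex.I * (θ : ℂ))) ^ (m + M + 1)) :=
  spectral_null_subspace_general N M r f hf
end

section
/- Let N ≥ 2 be an integer, let r_0, …, r_{N−1} be real numbers, and define f : ℝ → ℂ by f(θ) = Σ_{n=0}^{N−1} r_n e^{inθ}. If f has a spectral null of order N−2 at θ = 0, then there exists a real number c such that r_n = c · (−1)^n · binom(N−1, n) for all 0 ≤ n ≤ N−1; that is, the binomial design is, up to a real scale factor, the unique length-N design achieving a spectral null of order N−2. -/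
/-!
The `m`-th derivative of `f` at `0` is `iᵐ ∑ rₙ nᵐ`, so the spectral null says that the first
`N - 1` moments of `r` vanish. Hence `∑ rₙ q(n) = 0` for every polynomial `q` of degree `< N - 1`,
in particular for `q(n) = binom(n, k)`. These sums are the Taylor coefficients at `1` of
`p = ∑ rₙ Xⁿ`, so `(X - 1)^(N - 1)` divides `p`; as `deg p ≤ N - 1`, `p = a (X - 1)^(N - 1)`, whose
coefficients are `a (-1)^(N - 1 - n) binom(N - 1, n)`.
-/

open Complex Finset Polynomial

theorem hasDerivAt_cexp_const_mul_ofReal (w : ℂ) (θ : ℝ) :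
    HasDerivAt (fun t : ℝ => exp (w * t)) (w * exp (w * θ)) θ := by
  simpa [mul_comm] using ((hasDerivAt_id (θ : ℂ)).const_mul w).cexp.comp_ofReal

theorem iteratedDeriv_sum_mul_cexp {ι : Type*} (s : Finset ι) (c w : ι → ℂ) (m : ℕ) :
    iteratedDeriv m (fun θ : ℝ => ∑ i ∈ s, c i * exp (w i * θ)) =
      fun θ : ℝ => ∑ i ∈ s, c i * w i ^ m * exp (w i * θ) := by
  induction m generalizing c with
  | zero => simp
  | succ m ih =>
    have hderiv : deriv (fun θ : ℝ => ∑ i ∈ s, c i * exp (w i * θ)) =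
        fun θ : ℝ => ∑ i ∈ s, (c i * w i) * exp (w i * θ) := by
      funext θ
      refine (HasDerivAt.fun_sum fun i _ =>
        (hasDerivAt_cexp_const_mul_ofReal (w i) θ).const_mul (c i)).deriv.trans ?_
      simp only [mul_assoc]
    rw [iteratedDeriv_succ', hderiv]
    simpa only [pow_succ', mul_assoc] using ih fun i => c i * w i

theorem iteratedDeriv_sum_ofReal_mul_cexp_I_mul_at_zero (s : Finset ℕ) (r : ℕ → ℝ) (m : ℕ) :
    iteratedDeriv m (fun θ : ℝ => ∑ n ∈ s, (r n : ℂ) * exp (I * n * θ)) 0 =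
      I ^ m * ((∑ n ∈ s, r n * (n : ℝ) ^ m : ℝ) : ℂ) := by
  rw [iteratedDeriv_sum_mul_cexp s (fun n => (r n : ℂ)) (fun n => I * n)]
  push_cast
  simp only [mul_zero, exp_zero, mul_one, mul_sum, mul_pow]
  exact sum_congr rfl fun n _ => by ring

theorem sum_mul_eval_eq_zero_of_sum_mul_pow_eq_zero {ι R : Type*} [CommSemiring R]
    {s : Finset ι} {r x : ι → R} {d : ℕ} (h : ∀ m < d, ∑ i ∈ s, r i * x i ^ m = 0)
    {q : R[X]} (hq : q.natDegree < d) : ∑ i ∈ s, r i * q.eval (x i) = 0 := by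
  calc ∑ i ∈ s, r i * q.eval (x i)
      = ∑ m ∈ range d, q.coeff m * ∑ i ∈ s, r i * x i ^ m := by
        simp only [eval_eq_sum_range' hq, mul_sum, sum_comm (s := s)]
        exact sum_congr rfl fun m _ => sum_congr rfl fun i _ => by ring
    _ = 0 := sum_eq_zero fun m hm => by rw [h m (mem_range.1 hm), mul_zero]

theorem sum_mul_choose_eq_zero_of_sum_mul_pow_eq_zero {ι K : Type*} [Field K] [CharZero K]
    {s : Finset ι} {r : ι → K} {x : ι → ℕ} {d : ℕ}
    (h : ∀ m < d, ∑ i ∈ s, r i * (x i : K) ^ m = 0) {k : ℕ} (hk : k < d) :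
    ∑ i ∈ s, r i * ((x i).choose k : K) = 0 := by
  have hdesc := sum_mul_eval_eq_zero_of_sum_mul_pow_eq_zero h
    (q := descPochhammer K k) (by rwa [descPochhammer_natDegree])
  simp only [descPochhammer_eval_eq_descFactorial, Nat.descFactorial_eq_factorial_mul_choose,
    Nat.cast_mul, mul_left_comm _ (k.factorial : K), ← mul_sum] at hdesc
  exact (mul_eq_zero.1 hdesc).resolve_left (Nat.cast_ne_zero.2 k.factorial_ne_zero)

theorem Polynomial.taylor_one_coeff_sum_monomial {R : Type*} [CommSemiring R] (s : Finset ℕ)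
    (r : ℕ → R) (k : ℕ) :
    (taylor 1 (∑ n ∈ s, monomial n (r n))).coeff k = ∑ n ∈ s, r n * (n.choose k : R) := by
  rw [taylor_coeff, map_sum, eval_finsetSum]
  refine sum_congr rfl fun n _ => ?_
  rw [hasseDeriv_monomial, eval_monomial, one_pow, mul_one, mul_comm]

theorem Polynomial.eq_C_mul_X_add_C_pow_of_taylor_coeff_eq_zero {R : Type*} [CommRing R]
    {p : R[X]} {c : R} {d : ℕ} (hp : p.natDegree ≤ d) (h : ∀ k < d, (taylor c p).coeff k = 0) :
    p = C ((taylor c p).coeff d) * (X + C (-c)) ^ d := by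
  set a := (taylor c p).coeff d
  have htaylor : taylor c p = monomial d a := by
    ext k
    rcases lt_trichotomy k d with hk | rfl | hk
    · rw [h k hk, coeff_monomial, if_neg hk.ne']
    · rw [coeff_monomial, if_pos rfl]
    · rw [coeff_eq_zero_of_natDegree_lt ((natDegree_taylor p c).trans_lt (hp.trans_lt hk)),
        coeff_monomial, if_neg hk.ne]
  calc p = taylor (-c) (taylor c p) := by rw [taylor_taylor, neg_add_cancel, taylor_zero]
    _ = _ := by rw [htaylor, taylor_monomial]

/-- **Uniqueness of the binomial design.** If `f θ = ∑_{n<N} r_n e^{inθ}` with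
real coefficients has a spectral null of order `N − 2` at `θ = 0`, then the
coefficients are a real multiple of the alternating binomial coefficients. -/
theorem binomial_design_unique (N : ℕ) (hN : 2 ≤ N) (r : ℕ → ℝ) (f : ℝ → ℂ)
    (hf : ∀ θ : ℝ, f θ = ∑ n ∈ Finset.range N,
      (r n : ℂ) * Complex.exp (Complex.I * (n : ℂ) * (θ : ℂ)))
    (hnull : ∀ m : ℕ, m ≤ N - 2 → iteratedDeriv m f 0 = 0) :
    ∃ c : ℝ, ∀ n : ℕ, n ≤ N - 1 → r n = c * (-1 : ℝ) ^ n * ((N - 1).choose n : ℝ) := by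
  have hmoments : ∀ m < N - 1, ∑ n ∈ range N, r n * (n : ℝ) ^ m = 0 := fun m hm => by
    have h := hnull m (by omega)
    rw [funext hf, iteratedDeriv_sum_ofReal_mul_cexp_I_mul_at_zero] at h
    exact_mod_cast (mul_eq_zero.1 h).resolve_left (pow_ne_zero m I_ne_zero)
  set p : ℝ[X] := ∑ n ∈ range N, monomial n (r n)
  obtain ⟨a, hp⟩ : ∃ a, p = C a * (X + C (-1)) ^ (N - 1) := by
    refine ⟨_, eq_C_mul_X_add_C_pow_of_taylor_coeff_eq_zero ?_ fun k hk => ?_⟩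
    · exact natDegree_sum_le_of_forall_le _ _ fun n hn =>
        (natDegree_monomial_le _).trans (by simp at hn; omega)
    · rw [taylor_one_coeff_sum_monomial]
      exact sum_mul_choose_eq_zero_of_sum_mul_pow_eq_zero hmoments hk
  refine ⟨a * (-1) ^ (N - 1), fun n hn => ?_⟩
  have hcoeff : p.coeff n = r n := by simp [p, finsetSum_coeff, coeff_monomial]; omega
  rw [← hcoeff, hp, coeff_C_mul, coeff_X_add_C_pow, pow_sub₀ _ (neg_ne_zero.2 one_ne_zero) hn,
    ← inv_pow, inv_neg_one]
  ring
end

section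
/- Let m ≥ 1, N ≥ 1, M ≥ 0 be integers, D = 2^m, and ω = e^{2πi/D}. For each k = 1, …, m, let q^{(k)} : {0,…,N−1} → [0,∞) and p^{(k)} : {0,…,N−1} → {0,…,D−1}, and define f_k(θ, ζ) = Σ_{n=0}^{N−1} q^{(k)}_n ζ^{p^{(k)}_n} e^{inθ} for θ ∈ ℝ, ζ ∈ ℂ. Assume that for each k the function θ ↦ f_k(θ, −1) has a spectral null of order M at θ = 0. Then for each integer r with 1 ≤ r ≤ D−1, the function θ ↦ Π_{k=1}^{m} f_k(N^{k−1}·θ, ω^{2^{k−1}·r}) has a spectral null of order M at θ = 0. -/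
open Complex Finset Real

/-!
Write `r = 2 ^ v * u` with `u` odd; since `r < 2 ^ m` we have `v < m`, and for `k = m - 1 - v`
the power `ω ^ (2 ^ k * r) = (ω ^ 2 ^ (m - 1)) ^ u = (-1) ^ u = -1`. So the `k`-th factor of the
product is `θ ↦ f_k(N ^ k θ, -1)`, which vanishes to order `M` at `0` by hypothesis, and by the
Leibniz rule a product with a factor vanishing to order `M` vanishes to order `M` as well.
-/

theorem IsPrimitiveRoot.exists_pow_two_pow_mul_eq_neg_one {R : Type*} [CommRing R] [NoZeroDivisors R]
    {ζ : R} {m r : ℕ} (hζ : IsPrimitiveRoot ζ (2 ^ m)) (hr₀ : r ≠ 0) (hr : r < 2 ^ m) :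
    ∃ k < m, ζ ^ (2 ^ k * r) = -1 := by
  obtain ⟨v, u, hu, rfl⟩ := Nat.exists_eq_two_pow_mul_odd hr₀
  have hvm : v < m := by
    have : 2 ^ v < 2 ^ m := lt_of_le_of_lt (Nat.le_mul_of_pos_right _ hu.pos) hr
    exact (Nat.pow_lt_pow_iff_right (by norm_num)).mp this
  have hhalf : ζ ^ 2 ^ (m - 1) = -1 :=
    (hζ.pow (by positivity) (by rw [← pow_succ]; congr 1; omega)).eq_neg_one_of_two_right
  refine ⟨m - 1 - v, by omega, ?_⟩
  calc ζ ^ (2 ^ (m - 1 - v) * (2 ^ v * u)) = (ζ ^ 2 ^ (m - 1)) ^ u := by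
        rw [← pow_mul, ← mul_assoc, ← pow_add, Nat.sub_add_cancel (by omega)]
    _ = -1 := by rw [hhalf, hu.neg_one_pow]

section IteratedDeriv

variable {𝕜 𝔸 : Type*} [NontriviallyNormedField 𝕜] {x : 𝕜} {n : ℕ}

theorem iteratedDeriv_mul_eq_zero_of_forall_le [NormedRing 𝔸] [NormedAlgebra 𝕜 𝔸] {f g : 𝕜 → 𝔸}
    (hf : ContDiffAt 𝕜 n f x) (hg : ContDiffAt 𝕜 n g x)
    (hf₀ : ∀ i ≤ n, iteratedDeriv i f x = 0) :
    iteratedDeriv n (f * g) x = 0 := by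
  rw [iteratedDeriv_mul hf hg]
  refine Finset.sum_eq_zero fun i hi => ?_
  rw [hf₀ i (Nat.lt_succ_iff.mp (Finset.mem_range.mp hi)), mul_zero, zero_mul]

theorem iteratedDeriv_finset_prod_eq_zero_of_forall_le [NormedCommRing 𝔸] [NormedAlgebra 𝕜 𝔸]
    {ι : Type*} {s : Finset ι} {f : ι → 𝕜 → 𝔸} {i₀ : ι} (hi₀ : i₀ ∈ s)
    (hf : ∀ i ∈ s, ContDiffAt 𝕜 n (f i) x) (hf₀ : ∀ j ≤ n, iteratedDeriv j (f i₀) x = 0) :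
    iteratedDeriv n (fun y => ∏ i ∈ s, f i y) x = 0 := by
  classical
  have hsplit : (fun y => ∏ i ∈ s, f i y) = f i₀ * fun y => ∏ i ∈ s.erase i₀, f i y :=
    funext fun y => (Finset.mul_prod_erase s (f · y) hi₀).symm
  rw [hsplit]
  exact iteratedDeriv_mul_eq_zero_of_forall_le (hf i₀ hi₀)
    (contDiffAt_prod fun i hi => hf i (Finset.mem_of_mem_erase hi)) hf₀

end IteratedDeriv

theorem product_spectral_null_general (m N M : ℕ)
    (D : ℕ) (hD : D = 2 ^ m)
    (ω : ℂ) (hω : ω = Complex.exp (2 * Real.pi * Complex.I / (D : ℂ)))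
    (q : Fin m → ℕ → ℝ)
    (p : Fin m → ℕ → Fin D)
    (f : Fin m → ℝ → ℂ → ℂ)
    (hf : ∀ (k : Fin m) (θ : ℝ) (ζ : ℂ), f k θ ζ =
      ∑ n ∈ Finset.range N, (q k n : ℂ) * ζ ^ ((p k n : ℕ)) *
        Complex.exp (Complex.I * (n : ℂ) * (θ : ℂ)))
    (hnull : ∀ k : Fin m, ∀ j : ℕ, j ≤ M →
      iteratedDeriv j (fun θ : ℝ => f k θ (-1)) 0 = 0) :
    ∀ r : ℕ, 1 ≤ r → r ≤ D - 1 →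
      ∀ j : ℕ, j ≤ M →
        iteratedDeriv j
          (fun θ : ℝ => ∏ k : Fin m, f k ((N : ℝ) ^ (k : ℕ) * θ) (ω ^ (2 ^ (k : ℕ) * r))) 0 = 0 := by
  intro r hr₁ hr j hj
  have hsmooth : ∀ k ζ d, ContDiff ℝ d (fun θ => f k θ ζ) := fun k ζ d => by
    simp only [hf]
    exact ContDiff.sum fun n _ =>
      contDiff_const.mul (contDiff_const.mul ofRealCLM.contDiff).cexp
  have hprim : IsPrimitiveRoot ω (2 ^ m) := hω ▸ hD ▸ Complex.isPrimitiveRoot_exp D (by simp [hD])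
  obtain ⟨k₀, hk₀, hζ⟩ := hprim.exists_pow_two_pow_mul_eq_neg_one (r := r) (by omega) (by omega)
  refine iteratedDeriv_finset_prod_eq_zero_of_forall_le (Finset.mem_univ ⟨k₀, hk₀⟩)
    (fun k _ => ((hsmooth k _ _).comp (contDiff_const.mul contDiff_id)).contDiffAt) fun i hi => ?_
  simp only [hζ, iteratedDeriv_comp_const_smul (hsmooth _ _ _), mul_zero,
    hnull _ i (hi.trans hj), smul_zero]

/-- **Theorem 4.** Given `D = 2^m` and functions
`f_k(θ, ζ) = ∑_{n<N} q^{(k)}_n ζ^{p^{(k)}_n} e^{inθ}` such that each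
`θ ↦ f_k(θ, −1)` has an `M`-th order spectral null at `θ = 0`, each of the
functions `θ ↦ ∏_{k=1}^m f_k(N^{k−1} θ, ω^{2^{k−1} r})`, `1 ≤ r ≤ D − 1`, has an
`M`-th order spectral null at `θ = 0`. -/
theorem product_spectral_null (m N M : ℕ) (hm : 1 ≤ m) (hN : 1 ≤ N)
    (D : ℕ) (hD : D = 2 ^ m)
    (ω : ℂ) (hω : ω = Complex.exp (2 * Real.pi * Complex.I / (D : ℂ)))
    (q : Fin m → ℕ → ℝ) (hq : ∀ k n, 0 ≤ q k n)
    (p : Fin m → ℕ → Fin D)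
    (f : Fin m → ℝ → ℂ → ℂ)
    (hf : ∀ (k : Fin m) (θ : ℝ) (ζ : ℂ), f k θ ζ =
      ∑ n ∈ Finset.range N, (q k n : ℂ) * ζ ^ ((p k n : ℕ)) *
        Complex.exp (Complex.I * (n : ℂ) * (θ : ℂ)))
    (hnull : ∀ k : Fin m, ∀ j : ℕ, j ≤ M →
      iteratedDeriv j (fun θ : ℝ => f k θ (-1)) 0 = 0) :
    ∀ r : ℕ, 1 ≤ r → r ≤ D - 1 →
      ∀ j : ℕ, j ≤ M →
        iteratedDeriv j
          (fun θ : ℝ => ∏ k : Fin m, f k ((N : ℝ) ^ (k : ℕ) * θ) (ω ^ (2 ^ (k : ℕ) * r))) 0 = 0 :=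
  product_spectral_null_general m N M D hD ω hω q p f hf hnull
end

section
/- Let D ≥ 1, N₁ ≥ 1, N₂ ≥ 1 be integers, ω = e^{2πi/D}, and a, b natural numbers. Let q^{(1)} : {0,…,N₁−1} → [0,∞), p^{(1)} : {0,…,N₁−1} → {0,…,D−1}, q^{(2)} : {0,…,N₂−1} → [0,∞), and p^{(2)} : {0,…,N₂−1} → {0,…,D−1}. Then there exist q : {0,…,N₁N₂−1} → [0,∞) and p : {0,…,N₁N₂−1} → {0,…,D−1} such that for all θ ∈ ℝ: (Σ_{n=0}^{N₁−1} q^{(1)}_n ω^{a·p^{(1)}_n} e^{inθ}) · (Σ_{ℓ=0}^{N₂−1} q^{(2)}_ℓ ω^{b·p^{(2)}_ℓ} e^{iℓN₁θ}) = Σ_{j=0}^{N₁N₂−1} q_j ω^{p_j} e^{ijθ}; that is, the class of functions of this form is closed under products with dilated arguments. -/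
open Complex Finset Real

/-- Closure of the class `W_N(ω)` under products with dilated arguments:
the product of `∑_{n<N₁} q^{(1)}_n ω^{a p^{(1)}_n} e^{inθ}` and
`∑_{ℓ<N₂} q^{(2)}_ℓ ω^{b p^{(2)}_ℓ} e^{iℓN₁θ}` is again of the form
`∑_{j<N₁N₂} q_j ω^{p_j} e^{ijθ}` with `q_j ≥ 0` and `p_j ∈ {0,…,D−1}`. -/
theorem w_class_closed_under_dilated_products (D N₁ N₂ : ℕ) (hD : 1 ≤ D)
    (h₁ : 1 ≤ N₁) (h₂ : 1 ≤ N₂)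
    (ω : ℂ) (hω : ω = Complex.exp (2 * Real.pi * Complex.I / (D : ℂ)))
    (a b : ℕ)
    (q₁ : ℕ → ℝ) (hq₁ : ∀ n, 0 ≤ q₁ n) (p₁ : ℕ → Fin D)
    (q₂ : ℕ → ℝ) (hq₂ : ∀ n, 0 ≤ q₂ n) (p₂ : ℕ → Fin D) :
    ∃ (q : ℕ → ℝ) (p : ℕ → Fin D), (∀ j, 0 ≤ q j) ∧
      ∀ θ : ℝ,
        (∑ n ∈ Finset.range N₁, (q₁ n : ℂ) * ω ^ (a * ((p₁ n : ℕ))) *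
            Complex.exp (Complex.I * (n : ℂ) * (θ : ℂ))) *
        (∑ ℓ ∈ Finset.range N₂, (q₂ ℓ : ℂ) * ω ^ (b * ((p₂ ℓ : ℕ))) *
            Complex.exp (Complex.I * ((ℓ * N₁ : ℕ) : ℂ) * (θ : ℂ))) =
        ∑ j ∈ Finset.range (N₁ * N₂), (q j : ℂ) * ω ^ ((p j : ℕ)) *
            Complex.exp (Complex.I * (j : ℂ) * (θ : ℂ)) := by
  have hD0 : (D : ℂ) ≠ 0 := Nat.cast_ne_zero.mpr (by omega)
  have hωD : ω ^ D = 1 := by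
    rw [hω, ← Complex.exp_nat_mul, mul_div_cancel₀ _ hD0, Complex.exp_two_pi_mul_I]
  have hωmod : ∀ k : ℕ, ω ^ (k % D) = ω ^ k := fun k => by
    conv_rhs => rw [← Nat.mod_add_div k D]
    rw [pow_add, pow_mul, hωD, one_pow, mul_one]
  refine ⟨fun j => q₁ (j % N₁) * q₂ (j / N₁),
    fun j => ⟨(a * (p₁ (j % N₁) : ℕ) + b * (p₂ (j / N₁) : ℕ)) % D, Nat.mod_lt _ (by omega)⟩,
    fun j => mul_nonneg (hq₁ _) (hq₂ _), fun θ => ?_⟩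
  rw [Finset.sum_mul_sum, ← Finset.sum_product']
  refine Finset.sum_nbij' (fun p => p.1 + p.2 * N₁) (fun j => (j % N₁, j / N₁))
    ?_ ?_ ?_ ?_ ?_
  · rintro ⟨n, l⟩ h
    simp only [Finset.mem_product, Finset.mem_range] at h ⊢
    calc n + l * N₁ < N₁ + l * N₁ := by omega
      _ ≤ N₁ * N₂ := by nlinarith [h.1, h.2]
  · intro j h
    simp only [Finset.mem_range] at h
    simp only [Finset.mem_product, Finset.mem_range]
    constructor
    · exact Nat.mod_lt _ (by omega)
    · exact Nat.div_lt_of_lt_mul (by omega)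
  · rintro ⟨n, l⟩ h
    simp only [Finset.mem_product, Finset.mem_range] at h
    simp [Nat.add_mul_mod_self_right, Nat.mod_eq_of_lt h.1,
      Nat.add_mul_div_right _ _ (by omega : 0 < N₁), Nat.div_eq_of_lt h.1]
  · intro j h
    exact Nat.mod_add_div' j N₁
  · rintro ⟨n, l⟩ h
    simp only [Finset.mem_product, Finset.mem_range] at h
    have hn : (n + l * N₁) % N₁ = n := by
      rw [Nat.add_mul_mod_self_right, Nat.mod_eq_of_lt h.1]
    have hl : (n + l * N₁) / N₁ = l := by
      rw [Nat.add_mul_div_right _ _ (by omega : 0 < N₁), Nat.div_eq_of_lt h.1, zero_add]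
    simp only [hn, hl, hωmod, pow_add]
    push_cast
    rw [show Complex.I * (↑n + ↑l * ↑N₁) * ↑θ
        = Complex.I * ↑n * ↑θ + Complex.I * (↑l * ↑N₁) * ↑θ by ring, Complex.exp_add]
    ring
end

section
/- Let x, y : ℤ → ℝ be real sequences supported on {0, 1, …, L−1} that form a Golay complementary pair of length L, i.e., C_x[k] + C_y[k] = 2L·δ[k] for every integer k, where C_x[k] = Σ_{ℓ∈ℤ} x[ℓ]·x[ℓ−k]. Define the reversed sequences x̃[ℓ] = x[L−1−ℓ] and ỹ[ℓ] = y[L−1−ℓ], and for each ℓ ∈ ℤ the 2×2 real matrix S[ℓ] with first row (x[ℓ], −ỹ[ℓ]) and second row (y[ℓ], x̃[ℓ]). Then S is paraunitary: for every integer k, Σ_{ℓ∈ℤ} S[ℓ]·S[ℓ−k]ᵀ = 2L·δ[k]·I₂, where I₂ is the 2×2 identity matrix and δ[k] is the Kronecker delta. -/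
/-!
Entrywise, `S[ℓ] S[ℓ-k]ᵀ` pairs `x` with `x` and `ỹ` with `ỹ` on the diagonal, and `x` with `y`
against `x̃` with `ỹ` off the diagonal. The substitution `ℓ ↦ L - 1 + k - ℓ` shows that reversal
swaps the arguments of a correlation, `Σ f̃[ℓ] g̃[ℓ-k] = Σ g[ℓ] f[ℓ-k]`. Hence both diagonal
entries equal `C_x[k] + C_y[k]` and the off-diagonal entries cancel; finite support makes every
series summable, so the sums may be split termwise.
-/

open Matrix Function

theorem Function.HasFiniteSupport.comp_sub_left {M : Type*} [Zero M] {f : ℤ → M}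
    (hf : f.HasFiniteSupport) (c : ℤ) : HasFiniteSupport fun ℓ ↦ f (c - ℓ) :=
  hf.fun_comp_of_injective sub_right_injective

theorem Function.HasFiniteSupport.summable_mul {α R : Type*} [NonUnitalNonAssocSemiring R]
    [TopologicalSpace R] {f : α → R} (hf : f.HasFiniteSupport) (g : α → R) :
    Summable fun a ↦ f a * g a :=
  summable_of_hasFiniteSupport (hf.mul_left g)

theorem Function.hasFiniteSupport_of_eq_zero_of_lt_zero_or_le {M : Type*} [Zero M] {f : ℤ → M}
    {L : ℤ} (hf : ∀ ℓ, (ℓ < 0 ∨ L ≤ ℓ) → f ℓ = 0) : f.HasFiniteSupport := by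
  refine (Set.finite_Ico 0 L).subset fun ℓ hℓ ↦ ?_
  by_contra h
  exact hℓ (hf ℓ (by simp only [Set.mem_Ico, not_and_or, not_le, not_lt] at h; omega))

theorem Matrix.tsum_apply {X m n R : Type*} [AddCommMonoid R] [TopologicalSpace R] [T2Space R]
    {f : X → Matrix m n R} (hf : Summable f) (i : m) (j : n) :
    (∑' x, f x) i j = ∑' x, f x i j :=
  (congrFun (_root_.tsum_apply hf) j).trans (_root_.tsum_apply (Pi.summable.1 hf i))

theorem tsum_reflect_mul_reflect_shift {R : Type*} [NonUnitalNonAssocCommSemiring R]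
    [TopologicalSpace R] (c k : ℤ) (f g : ℤ → R) :
    ∑' ℓ, f (c - ℓ) * g (c - (ℓ - k)) = ∑' ℓ, g ℓ * f (ℓ - k) := by
  rw [← (Equiv.subLeft (c + k)).tsum_eq]
  refine tsum_congr fun ℓ ↦ ?_
  rw [Equiv.subLeft_apply, mul_comm]
  congr 2 <;> ring

section GolayMatrix

variable {R : Type*} [CommRing R] {x y : ℤ → R}

def golayMatrix (c : ℤ) (x y : ℤ → R) (ℓ : ℤ) : Matrix (Fin 2) (Fin 2) R :=
  !![x ℓ, -y (c - ℓ); y ℓ, x (c - ℓ)]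

theorem hasFiniteSupport_golayMatrix (c : ℤ) (hx : x.HasFiniteSupport)
    (hy : y.HasFiniteSupport) : (golayMatrix c x y).HasFiniteSupport := by
  refine HasFiniteSupport.pi fun i ↦ HasFiniteSupport.pi fun j ↦ ?_
  fin_cases i <;> fin_cases j
  exacts [hx, (hy.comp_sub_left c).neg, hy, hx.comp_sub_left c]

theorem tsum_golayMatrix_mul_transpose [TopologicalSpace R] [IsTopologicalAddGroup R]
    [T2Space R] (c k : ℤ) (hx : x.HasFiniteSupport) (hy : y.HasFiniteSupport) :
    ∑' ℓ, golayMatrix c x y ℓ * (golayMatrix c x y (ℓ - k))ᵀ =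
      (∑' ℓ, x ℓ * x (ℓ - k) + ∑' ℓ, y ℓ * y (ℓ - k)) • 1 := by
  have hS : Summable fun ℓ ↦ golayMatrix c x y ℓ * (golayMatrix c x y (ℓ - k))ᵀ :=
    (hasFiniteSupport_golayMatrix c hx hy).summable_mul _
  have hx' := hx.comp_sub_left c
  have hy' := hy.comp_sub_left c
  ext i j
  rw [Matrix.tsum_apply hS]
  fin_cases i <;> fin_cases j <;>
    simp only [golayMatrix, Fin.zero_eta, Fin.mk_one, Fin.isValue, mul_apply, of_apply, cons_val',
      cons_val_fin_one, cons_val_zero, cons_val_one, transpose_apply, Fin.sum_univ_two, mul_neg,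
      neg_mul, neg_neg, Matrix.smul_apply, one_apply_eq, ne_eq, zero_ne_one, one_ne_zero,
      not_false_eq_true, one_apply_ne, smul_eq_mul, mul_one, mul_zero]
  · rw [(hx.summable_mul _).tsum_add (hy'.summable_mul _), tsum_reflect_mul_reflect_shift]
  · rw [(hx.summable_mul _).tsum_add (hy'.summable_mul _).neg, tsum_neg,
      tsum_reflect_mul_reflect_shift, add_neg_cancel]
  · rw [(hy.summable_mul _).tsum_add (hx'.summable_mul _).neg, tsum_neg,
      tsum_reflect_mul_reflect_shift, add_neg_cancel]
  · rw [(hy.summable_mul _).tsum_add (hx'.summable_mul _), tsum_reflect_mul_reflect_shift,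
      add_comm]

end GolayMatrix

theorem golay_pair_paraunitary_general (L : ℕ) (x y : ℤ → ℝ)
    (hx : ∀ ℓ : ℤ, (ℓ < 0 ∨ (L : ℤ) ≤ ℓ) → x ℓ = 0)
    (hy : ∀ ℓ : ℤ, (ℓ < 0 ∨ (L : ℤ) ≤ ℓ) → y ℓ = 0)
    (hGolay : ∀ k : ℤ,
      (∑' ℓ : ℤ, x ℓ * x (ℓ - k)) + (∑' ℓ : ℤ, y ℓ * y (ℓ - k)) =
        if k = 0 then (2 * L : ℝ) else 0)
    (S : ℤ → Matrix (Fin 2) (Fin 2) ℝ)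
    (hS : ∀ ℓ : ℤ, S ℓ = !![x ℓ, -(y ((L : ℤ) - 1 - ℓ)); y ℓ, x ((L : ℤ) - 1 - ℓ)]) :
    ∀ k : ℤ, (∑' ℓ : ℤ, S ℓ * (S (ℓ - k))ᵀ) =
      if k = 0 then (2 * L : ℝ) • (1 : Matrix (Fin 2) (Fin 2) ℝ) else 0 := by
  intro k
  obtain rfl : S = golayMatrix ((L : ℤ) - 1) x y := funext hS
  rw [tsum_golayMatrix_mul_transpose _ k (hasFiniteSupport_of_eq_zero_of_lt_zero_or_le hx)
    (hasFiniteSupport_of_eq_zero_of_lt_zero_or_le hy), hGolay k, ite_smul, zero_smul]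

/-- **Paraunitary matrix from a Golay pair (eq. (49)–(50)).** If real sequences
`x, y` supported on `{0,…,L−1}` form a Golay complementary pair of length `L`,
then the 2×2 matrix sequence `S[ℓ] = [[x[ℓ], −ỹ[ℓ]], [y[ℓ], x̃[ℓ]]]`, with
`x̃[ℓ] = x[L−1−ℓ]`, `ỹ[ℓ] = y[L−1−ℓ]`, is paraunitary:
`∑_ℓ S[ℓ] S[ℓ−k]ᵀ = 2L δ[k] I₂`. -/
theorem golay_pair_paraunitary (L : ℕ) (hL : 1 ≤ L) (x y : ℤ → ℝ)
    (hx : ∀ ℓ : ℤ, (ℓ < 0 ∨ (L : ℤ) ≤ ℓ) → x ℓ = 0)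
    (hy : ∀ ℓ : ℤ, (ℓ < 0 ∨ (L : ℤ) ≤ ℓ) → y ℓ = 0)
    (hGolay : ∀ k : ℤ,
      (∑' ℓ : ℤ, x ℓ * x (ℓ - k)) + (∑' ℓ : ℤ, y ℓ * y (ℓ - k)) =
        if k = 0 then (2 * L : ℝ) else 0)
    (S : ℤ → Matrix (Fin 2) (Fin 2) ℝ)
    (hS : ∀ ℓ : ℤ, S ℓ = !![x ℓ, -(y ((L : ℤ) - 1 - ℓ)); y ℓ, x ((L : ℤ) - 1 - ℓ)]) :
    ∀ k : ℤ, (∑' ℓ : ℤ, S ℓ * (S (ℓ - k))ᵀ) =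
      if k = 0 then (2 * L : ℝ) • (1 : Matrix (Fin 2) (Fin 2) ℝ) else 0 :=
  golay_pair_paraunitary_general L x y hx hy hGolay S hS
end

section
/- Let D ≥ 1 and L ≥ 1 be integers, c a real number, and S : ℤ → M_D(ℂ) a matrix-valued sequence supported on {0, 1, …, L−1} that is paraunitary with constant c: Σ_{ℓ∈ℤ} S[ℓ]·S[ℓ−k]^H = c·δ[k]·I_D for every integer k, where ^H denotes conjugate transpose. Define S̃[ℓ] to be the entrywise complex conjugate of S[L−1−ℓ], and let T : ℤ → M_{2D}(ℂ) be the block matrix sequence T[ℓ] = [[S[ℓ], S[ℓ]], [S̃[ℓ], −S̃[ℓ]]]. Then T is paraunitary with constant 2c: Σ_{ℓ∈ℤ} T[ℓ]·T[ℓ−k]^H = 2c·δ[k]·I_{2D} for every integer k. -/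
open Matrix

lemma fromBlocks_sum' {α l m n o ι : Type*} [AddCommMonoid α] (s : Finset ι)
    (A : ι → Matrix n l α) (B : ι → Matrix n m α) (C : ι → Matrix o l α)
    (D : ι → Matrix o m α) :
    ∑ i ∈ s, Matrix.fromBlocks (A i) (B i) (C i) (D i) =
      Matrix.fromBlocks (∑ i ∈ s, A i) (∑ i ∈ s, B i) (∑ i ∈ s, C i) (∑ i ∈ s, D i) := by
  classical
  induction s using Finset.cons_induction with
  | empty => simp [Matrix.fromBlocks_zero]
  | cons a s ha ih => rw [Finset.sum_cons, Finset.sum_cons, Finset.sum_cons,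
      Finset.sum_cons, Finset.sum_cons, ih, Matrix.fromBlocks_add]

lemma conj_mul_conjT {D : ℕ} (A B : Matrix (Fin D) (Fin D) ℂ) :
    A.map (starRingEnd ℂ) * (B.map (starRingEnd ℂ))ᴴ = (B * Aᴴ)ᵀ := by
  ext i j
  simp [Matrix.mul_apply, Matrix.conjTranspose_apply, Matrix.transpose_apply,
    Matrix.map_apply, mul_comm]

/-- **Recursive paraunitary construction (eq. (51)).** If `S : ℤ → M_D(ℂ)` is
supported on `{0,…,L−1}` and paraunitary with constant `c`, then the block
sequence `T[ℓ] = [[S[ℓ], S[ℓ]], [S̃[ℓ], −S̃[ℓ]]]`, where `S̃[ℓ]` is the entrywise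
conjugate of `S[L−1−ℓ]`, is paraunitary with constant `2c`. -/
theorem paraunitary_doubling (D L : ℕ) (hD : 1 ≤ D) (hL : 1 ≤ L) (c : ℝ)
    (S : ℤ → Matrix (Fin D) (Fin D) ℂ)
    (hSsupp : ∀ ℓ : ℤ, (ℓ < 0 ∨ (L : ℤ) ≤ ℓ) → S ℓ = 0)
    (hpara : ∀ k : ℤ, (∑' ℓ : ℤ, S ℓ * (S (ℓ - k))ᴴ) =
      if k = 0 then ((c : ℂ) • (1 : Matrix (Fin D) (Fin D) ℂ)) else 0)
    (St : ℤ → Matrix (Fin D) (Fin D) ℂ)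
    (hSt : ∀ ℓ : ℤ, St ℓ = (S ((L : ℤ) - 1 - ℓ)).map (starRingEnd ℂ))
    (T : ℤ → Matrix (Fin D ⊕ Fin D) (Fin D ⊕ Fin D) ℂ)
    (hT : ∀ ℓ : ℤ, T ℓ = Matrix.fromBlocks (S ℓ) (S ℓ) (St ℓ) (-(St ℓ))) :
    ∀ k : ℤ, (∑' ℓ : ℤ, T ℓ * (T (ℓ - k))ᴴ) =
      if k = 0 then (((2 * c : ℝ) : ℂ) • (1 : Matrix (Fin D ⊕ Fin D) (Fin D ⊕ Fin D) ℂ)) else 0 := by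
  classical
  intro k
  set I₁ : Finset ℤ := Finset.Icc 0 ((L : ℤ) - 1) with hI₁
  set I₂ : Finset ℤ := Finset.Icc k ((L : ℤ) - 1 + k) with hI₂
  -- support facts
  have hSzero : ∀ ℓ : ℤ, ℓ ∉ I₁ → S ℓ = 0 := by
    intro ℓ h
    rw [hI₁, Finset.mem_Icc] at h
    push_neg at h
    rcases lt_or_ge ℓ 0 with h0 | h0
    · exact hSsupp ℓ (Or.inl h0)
    · exact hSsupp ℓ (Or.inr (by omega))
  have hStzero : ∀ ℓ : ℤ, ℓ ∉ I₁ → St ℓ = 0 := by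
    intro ℓ h
    rw [hSt]
    have : S ((L : ℤ) - 1 - ℓ) = 0 := by
      apply hSzero
      rw [hI₁, Finset.mem_Icc] at h ⊢
      omega
    simp [this]
  -- the S-sum as a finite sum over I₁
  have hP : (∑ ℓ ∈ I₁, S ℓ * (S (ℓ - k))ᴴ) =
      if k = 0 then ((c : ℂ) • (1 : Matrix (Fin D) (Fin D) ℂ)) else 0 := by
    rw [← hpara k]
    exact (tsum_eq_sum (fun ℓ h => by rw [hSzero ℓ h, zero_mul])).symm
  -- the S-sum as a finite sum over I₂ (terms vanish off the support in the second factor)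
  have hP₂ : (∑ ℓ ∈ I₂, S ℓ * (S (ℓ - k))ᴴ) =
      if k = 0 then ((c : ℂ) • (1 : Matrix (Fin D) (Fin D) ℂ)) else 0 := by
    rw [← hpara k]
    refine (tsum_eq_sum (fun ℓ h => ?_)).symm
    have : S (ℓ - k) = 0 := by
      apply hSzero
      rw [hI₂, Finset.mem_Icc] at h
      rw [hI₁, Finset.mem_Icc]
      omega
    rw [this, conjTranspose_zero, mul_zero]
  -- the conjugated sum equals the transpose of the S-sum over I₂
  have hQ : (∑ ℓ ∈ I₁, St ℓ * (St (ℓ - k))ᴴ) =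
      (if k = 0 then ((c : ℂ) • (1 : Matrix (Fin D) (Fin D) ℂ)) else 0) := by
    have h1 : ∀ ℓ : ℤ, St ℓ * (St (ℓ - k))ᴴ =
        (S ((L : ℤ) - 1 + k - ℓ) * (S (((L : ℤ) - 1 + k - ℓ) - k))ᴴ)ᵀ := by
      intro ℓ
      rw [hSt, hSt, conj_mul_conjT]
      congr 2 <;> ring_nf
    calc (∑ ℓ ∈ I₁, St ℓ * (St (ℓ - k))ᴴ)
        = ∑ ℓ ∈ I₁, (S ((L : ℤ) - 1 + k - ℓ) * (S (((L : ℤ) - 1 + k - ℓ) - k))ᴴ)ᵀ := by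
          exact Finset.sum_congr rfl (fun ℓ _ => h1 ℓ)
      _ = ∑ j ∈ I₂, (S j * (S (j - k))ᴴ)ᵀ := by
          refine Finset.sum_nbij' (fun ℓ => (L : ℤ) - 1 + k - ℓ)
            (fun j => (L : ℤ) - 1 + k - j) ?_ ?_ ?_ ?_ ?_ <;>
            intro x hx <;> simp only [hI₁, hI₂, Finset.mem_Icc] at * <;> omega
      _ = (∑ j ∈ I₂, S j * (S (j - k))ᴴ)ᵀ := by rw [Matrix.transpose_sum]
      _ = (if k = 0 then ((c : ℂ) • (1 : Matrix (Fin D) (Fin D) ℂ)) else 0)ᵀ := by rw [hP₂]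
      _ = _ := by
          split <;> simp [Matrix.transpose_smul]
  -- pointwise block computation
  have hblock : ∀ ℓ : ℤ, T ℓ * (T (ℓ - k))ᴴ =
      Matrix.fromBlocks (S ℓ * (S (ℓ - k))ᴴ + S ℓ * (S (ℓ - k))ᴴ) 0 0
        (St ℓ * (St (ℓ - k))ᴴ + St ℓ * (St (ℓ - k))ᴴ) := by
    intro ℓ
    rw [hT, hT, Matrix.fromBlocks_conjTranspose, Matrix.fromBlocks_multiply]
    congr 1 <;> simp [mul_neg]
  -- T vanishes off I₁
  have hTzero : ∀ ℓ : ℤ, ℓ ∉ I₁ → T ℓ * (T (ℓ - k))ᴴ = 0 := by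
    intro ℓ h
    rw [hT, hSzero ℓ h, hStzero ℓ h, neg_zero, Matrix.fromBlocks_zero, zero_mul]
  rw [tsum_eq_sum hTzero, Finset.sum_congr rfl (fun ℓ _ => hblock ℓ), fromBlocks_sum',
    Finset.sum_add_distrib, Finset.sum_add_distrib, hP, hQ]
  split
  · rw [Finset.sum_const, smul_zero]
    have hX : (c : ℂ) • (1 : Matrix (Fin D) (Fin D) ℂ) + (c : ℂ) • 1 =
        ((2 * c : ℝ) : ℂ) • 1 := by
      push_cast
      rw [two_mul, add_smul]
    rw [hX, ← Matrix.fromBlocks_one (l := Fin D) (m := Fin D) (α := ℂ),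
      Matrix.fromBlocks_smul, smul_zero]
  · rw [Finset.sum_const, smul_zero]
    simp [Matrix.fromBlocks_zero]
end

section
/- Let D ≥ 1, L ≥ 1 and N ≥ 1 be integers, ω = e^{2πi/D}, and let x_0, …, x_{D−1} : ℤ → ℂ^D be vector-valued sequences supported on {0, 1, …, L−1} forming a complementary vector set: Σ_{d=0}^{D−1} C_{x_d}[k] = D·L·δ[k]·I_D for every integer k, where C_{x_d}[k] = Σ_{ℓ∈ℤ} x_d[ℓ]·x_d[ℓ−k]^H is the D×D autocorrelation matrix of x_d at lag k. Let p : {0,…,N−1} → {0,…,D−1} and q_0, …, q_{N−1} ∈ ℝ. Then for every integer k and every θ ∈ ℝ, the matrix-valued cross-ambiguity satisfies: Σ_{n=0}^{N−1} q_n e^{inθ} C_{x_{p_n}}[k] = (1/D)·( D·L·δ[k]·(Σ_{n=0}^{N−1} q_n e^{inθ})·I_D + Σ_{r=1}^{D−1} S_r(θ)·Δ_r(k) ), where S_r(θ) = Σ_{n=0}^{N−1} ω^{r·p_n} q_n e^{inθ} and Δ_r(k) = Σ_{d=0}^{D−1} ω^{−r·d} C_{x_d}[k]. -/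
open Complex Finset Matrix Real

lemma mimo_root_orth (D : ℕ) (hD : 1 ≤ D) (ω : ℂ)
    (hω : ω = Complex.exp (2 * Real.pi * Complex.I / (D : ℂ))) (a b : Fin D) :
    ∑ r ∈ Finset.range D, ω ^ (r * (a:ℕ)) * ω ^ (-((r:ℤ) * ((b:ℕ):ℤ))) =
      if a = b then (D:ℂ) else 0 := by
  have hprim : IsPrimitiveRoot ω D := by
    rw [hω]; exact Complex.isPrimitiveRoot_exp D (by omega)
  have hω0 : ω ≠ 0 := hprim.ne_zero (by omega)
  have hterm : ∀ r : ℕ, ω ^ (r * (a:ℕ)) * ω ^ (-((r:ℤ) * ((b:ℕ):ℤ)))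
      = (ω ^ (((a:ℕ):ℤ) - ((b:ℕ):ℤ))) ^ r := by
    intro r
    rw [← zpow_natCast ω (r * a), ← zpow_add₀ hω0, ← zpow_natCast (ω ^ (((a:ℕ):ℤ) - ((b:ℕ):ℤ))) r,
      ← _root_.zpow_mul]
    congr 1
    push_cast
    ring
  simp only [hterm]
  by_cases h : a = b
  · subst h; simp
  · have hne : ω ^ (((a:ℕ):ℤ) - ((b:ℕ):ℤ)) ≠ 1 := by
      intro hcon
      rw [hprim.zpow_eq_one_iff_dvd] at hcon
      have h0 : ((a:ℕ):ℤ) - ((b:ℕ):ℤ) = 0 := by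
        refine Int.eq_zero_of_abs_lt_dvd hcon ?_
        have ha := a.isLt; have hb := b.isLt
        rw [abs_lt]; omega
      exact h (Fin.ext (by omega))
    rw [geom_sum_eq hne]
    have hpow : (ω ^ (((a:ℕ):ℤ) - ((b:ℕ):ℤ))) ^ D = 1 := by
      rw [← zpow_natCast (ω ^ (((a:ℕ):ℤ) - ((b:ℕ):ℤ))) D, ← _root_.zpow_mul, mul_comm,
        _root_.zpow_mul, zpow_natCast, hprim.pow_eq_one, _root_.one_zpow]
    rw [hpow]; simp [h]

/-- **MIMO cross-ambiguity decomposition (eq. (58)).** For a complementary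
vector set `x_0, …, x_{D−1} : ℤ → ℂ^D` and sequences `p`, `q`, the matrix-valued
cross-ambiguity splits into a delta term times the identity and a sidelobe term
weighted by the spectra `S_r`. -/
theorem mimo_pq_cross_ambiguity (D L N : ℕ) (hD : 1 ≤ D) (hL : 1 ≤ L) (hN : 1 ≤ N)
    (ω : ℂ) (hω : ω = Complex.exp (2 * Real.pi * Complex.I / (D : ℂ)))
    (x : Fin D → ℤ → (Fin D → ℂ))
    (hx : ∀ (d : Fin D) (ℓ : ℤ), (ℓ < 0 ∨ (L : ℤ) ≤ ℓ) → x d ℓ = 0)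
    (C : Fin D → ℤ → Matrix (Fin D) (Fin D) ℂ)
    (hC : ∀ (d : Fin D) (k : ℤ),
      C d k = ∑' ℓ : ℤ, Matrix.vecMulVec (x d ℓ) (star (x d (ℓ - k))))
    (hcomp : ∀ k : ℤ, ∑ d : Fin D, C d k =
      if k = 0 then ((D * L : ℂ) • (1 : Matrix (Fin D) (Fin D) ℂ)) else 0)
    (p : ℕ → Fin D) (q : ℕ → ℝ) :
    ∀ (k : ℤ) (θ : ℝ),
      ∑ n ∈ Finset.range N,
          ((q n : ℂ) * Complex.exp (Complex.I * (n : ℂ) * (θ : ℂ))) • C (p n) k =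
      (1 / (D : ℂ)) •
        (((D * L : ℂ) * (if k = 0 then 1 else 0) *
            (∑ n ∈ Finset.range N, (q n : ℂ) * Complex.exp (Complex.I * (n : ℂ) * (θ : ℂ)))) •
              (1 : Matrix (Fin D) (Fin D) ℂ) +
          ∑ r ∈ Finset.Icc 1 (D - 1),
            (∑ n ∈ Finset.range N,
              ω ^ (r * ((p n : ℕ))) * (q n : ℂ) * Complex.exp (Complex.I * (n : ℂ) * (θ : ℂ))) •
            (∑ d : Fin D, ω ^ (-(((r : ℤ)) * ((d : ℕ) : ℤ))) • C d k)) := by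
  intro k θ
  have hD0 : (D : ℂ) ≠ 0 := Nat.cast_ne_zero.mpr (by omega)
  have hins : (Finset.range D) = insert 0 (Finset.Icc 1 (D - 1)) := by
    ext r; simp only [Finset.mem_range, Finset.mem_insert, Finset.mem_Icc]; omega
  -- the delta term equals the r = 0 term of the full sum
  have hF0 : ((D * L : ℂ) * (if k = 0 then 1 else 0) *
      (∑ n ∈ Finset.range N, (q n : ℂ) * Complex.exp (Complex.I * (n : ℂ) * (θ : ℂ)))) •
        (1 : Matrix (Fin D) (Fin D) ℂ) =
      (∑ n ∈ Finset.range N,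
          ω ^ (0 * ((p n : ℕ))) * (q n : ℂ) * Complex.exp (Complex.I * (n : ℂ) * (θ : ℂ))) •
        (∑ d : Fin D, ω ^ (-(((0:ℕ) : ℤ)) * ((d : ℕ) : ℤ)) • C d k) := by
    simp only [Nat.zero_mul, pow_zero, Int.natCast_zero, neg_zero, zero_mul, zpow_zero,
      one_mul, one_smul, hcomp k]
    by_cases hk : k = 0 <;> simp [hk, smul_smul, mul_comm]
  -- merge delta term and sidelobe sum into a full sum over range D
  have hmerge : ((D * L : ℂ) * (if k = 0 then 1 else 0) *
      (∑ n ∈ Finset.range N, (q n : ℂ) * Complex.exp (Complex.I * (n : ℂ) * (θ : ℂ)))) •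
        (1 : Matrix (Fin D) (Fin D) ℂ) +
      ∑ r ∈ Finset.Icc 1 (D - 1),
        (∑ n ∈ Finset.range N,
          ω ^ (r * ((p n : ℕ))) * (q n : ℂ) * Complex.exp (Complex.I * (n : ℂ) * (θ : ℂ))) •
        (∑ d : Fin D, ω ^ (-(((r : ℤ)) * ((d : ℕ) : ℤ))) • C d k) =
      ∑ r ∈ Finset.range D,
        (∑ n ∈ Finset.range N,
          ω ^ (r * ((p n : ℕ))) * (q n : ℂ) * Complex.exp (Complex.I * (n : ℂ) * (θ : ℂ))) •
        (∑ d : Fin D, ω ^ (-(((r : ℤ)) * ((d : ℕ) : ℤ))) • C d k) := by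
    rw [hins, Finset.sum_insert (by simp)]
    congr 1
    rw [hF0]
    norm_num
  rw [hmerge]
  -- evaluate the full sum via root-of-unity orthogonality
  have hsum : ∑ r ∈ Finset.range D,
      (∑ n ∈ Finset.range N,
        ω ^ (r * ((p n : ℕ))) * (q n : ℂ) * Complex.exp (Complex.I * (n : ℂ) * (θ : ℂ))) •
      (∑ d : Fin D, ω ^ (-(((r : ℤ)) * ((d : ℕ) : ℤ))) • C d k) =
      (D : ℂ) • ∑ n ∈ Finset.range N,
        ((q n : ℂ) * Complex.exp (Complex.I * (n : ℂ) * (θ : ℂ))) • C (p n) k := by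
    have hexp : ∀ r, (∑ n ∈ Finset.range N,
        ω ^ (r * ((p n : ℕ))) * (q n : ℂ) * Complex.exp (Complex.I * (n : ℂ) * (θ : ℂ))) •
        (∑ d : Fin D, ω ^ (-(((r : ℤ)) * ((d : ℕ) : ℤ))) • C d k) =
        ∑ n ∈ Finset.range N, ∑ d : Fin D,
          (ω ^ (r * ((p n : ℕ))) * ω ^ (-(((r:ℤ)) * ((d:ℕ):ℤ)))) •
            (((q n : ℂ) * Complex.exp (Complex.I * (n : ℂ) * (θ : ℂ))) • C d k) := by
      intro r
      rw [Finset.sum_smul]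
      refine Finset.sum_congr rfl fun n _ => ?_
      rw [Finset.smul_sum]
      refine Finset.sum_congr rfl fun d _ => ?_
      rw [smul_smul, smul_smul]
      congr 1
      ring
    simp only [hexp]
    rw [Finset.sum_comm, Finset.smul_sum]
    refine Finset.sum_congr rfl fun n _ => ?_
    rw [Finset.sum_comm]
    have horth : ∀ d : Fin D, ∑ r ∈ Finset.range D,
        (ω ^ (r * ((p n : ℕ))) * ω ^ (-(((r:ℤ)) * ((d:ℕ):ℤ)))) •
          (((q n : ℂ) * Complex.exp (Complex.I * (n : ℂ) * (θ : ℂ))) • C d k) =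
        (if p n = d then (D:ℂ) else 0) •
          (((q n : ℂ) * Complex.exp (Complex.I * (n : ℂ) * (θ : ℂ))) • C d k) := by
      intro d
      rw [← Finset.sum_smul, mimo_root_orth D hD ω hω (p n) d]
    simp only [horth]
    simp [ite_smul, Finset.sum_ite_eq]
  rw [hsum, smul_smul, one_div, inv_mul_cancel₀ hD0, one_smul]
end
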